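/- Assume Γ_{x₀} has full rank and the vanishing-derivative problem is feasible. Then the vanishing derivative pre-certificate is unique and given in closed form by η_V = Φ* Γ_{x₀}(Γ_{x₀}* Γ_{x₀})^{−1} (sign(a₀), 0)ᵀ. -/

import Mathlib

open MeasureTheory

attribute [local instance] ZeroLEOneClass.factZeroLtOne

noncomputable section

/-- The torus `T = ℝ/ℤ`. -/
abbrev 𝕋 := AddCircle (1 : ℝ)

/-- Integral `∫ f dm` of a function against a (finite) signed Radon measure on the torus. -/
def sInt (m : SignedMeasure 𝕋) (f : 𝕋 → ℝ) : ℝ :=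
  ∫ x, f x ∂m.toJordanDecomposition.posPart - ∫ x, f x ∂m.toJordanDecomposition.negPart

/-- The total variation norm `‖m‖_TV = sup { ∫ ψ dm : ψ ∈ C(𝕋), ‖ψ‖_∞ ≤ 1 }`. -/
def tv (m : SignedMeasure 𝕋) : ℝ :=
  sSup { r | ∃ ψ : C(𝕋, ℝ), ‖ψ‖ ≤ 1 ∧ r = sInt m ψ }

/-- The lift of a function on the torus to a `1`-periodic function on `ℝ`. -/
def lift (f : 𝕋 → ℝ) : ℝ → ℝ := fun s => f (s : 𝕋)

/-- The convolution operator `Φ : M(𝕋) → L²(𝕋)`, `(Φm)(t) = ∫ φ(x − t) dm(x)`. -/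
def Phi (φ : 𝕋 → ℝ) (m : SignedMeasure 𝕋) : 𝕋 → ℝ := fun t => sInt m (fun x => φ (x - t))

/-- The adjoint operator `Φ* : L²(𝕋) → C(𝕋)`, `(Φ*p)(t) = ∫ φ(t − x) p(x) dx`. -/
def PhiStar (φ : 𝕋 → ℝ) (p : 𝕋 → ℝ) : 𝕋 → ℝ := fun t => ∫ x, φ (t - x) * p x

/-- The `L²(𝕋)` norm of a function. -/
def L2norm (p : 𝕋 → ℝ) : ℝ := Real.sqrt (∫ t, (p t) ^ 2)

/-- The `L²(𝕋)` inner product. -/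
def dotL2 (y p : 𝕋 → ℝ) : ℝ := ∫ t, y t * p t

/-- `p` is admissible for the dual problems: `p ∈ L²` and `‖Φ*p‖_∞ ≤ 1`. -/
def DualAdm (φ : 𝕋 → ℝ) (p : 𝕋 → ℝ) : Prop :=
  MemLp p 2 volume ∧ ∀ t : 𝕋, |PhiStar φ p t| ≤ 1


variable {N : ℕ}

/-- The `2N` kernel functions `φ(x₀ᵢ − ·)` and `φ'(x₀ᵢ − ·)` defining
`Γ_{x₀} : ℝ^{2N} → L²(𝕋)` (here `φd` denotes `φ'`). -/
def gker (φ φd : 𝕋 → ℝ) (x₀ : Fin N → ℝ) : Fin N ⊕ Fin N → 𝕋 → ℝ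
  | Sum.inl i => fun t => φ (((x₀ i : ℝ) : 𝕋) - t)
  | Sum.inr i => fun t => φd (((x₀ i : ℝ) : 𝕋) - t)

/-- The Gram matrix `Γ_{x₀}* Γ_{x₀} ∈ ℝ^{2N×2N}`. -/
def gram (φ φd : 𝕋 → ℝ) (x₀ : Fin N → ℝ) :
    Matrix (Fin N ⊕ Fin N) (Fin N ⊕ Fin N) ℝ :=
  fun j k => ∫ t, gker φ φd x₀ j t * gker φ φd x₀ k t

/-- The interpolation constraints of the vanishing derivative pre-certificate:
`(Φ*p)(x₀ᵢ) = sign(a₀ᵢ)` and `(Φ*p)'(x₀ᵢ) = 0` for all `i`. -/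
def VConstr (φ : 𝕋 → ℝ) (a₀ : Fin N → ℝ) (x₀ : Fin N → ℝ) (p : 𝕋 → ℝ) : Prop :=
  ∀ i, PhiStar φ p ((x₀ i : ℝ) : 𝕋) = Real.sign (a₀ i) ∧
    deriv (lift (PhiStar φ p)) (x₀ i) = 0

/-!
Both constraints are inner products with the kernel functions: `(Φ*p)(x₀ᵢ) = ⟨φ(x₀ᵢ − ·), p⟩`
and, differentiating under the integral sign, `(Φ*p)'(x₀ᵢ) = ⟨φ'(x₀ᵢ − ·), p⟩`, so the feasible
set is `{p ∈ L² : Γ* p = b}` with `b = (sign a₀, 0)`. The function `P = Γ (Γ*Γ)⁻¹ b` is feasible,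
and for feasible `q` we get `⟨P, q⟩ = ⟨(Γ*Γ)⁻¹ b, Γ* q⟩ = ⟨P, P⟩`, hence
`‖q‖² = ‖P‖² + ‖q − P‖²`. So `P` is the minimal-norm solution, unique up to null sets, which
`Φ*` does not see.
-/

section MinNormInterpolation

open scoped Matrix

variable {α ι : Type*} [MeasurableSpace α] [Fintype ι] (μ : Measure α) (g : ι → α → ℝ)

def l2Gram : Matrix ι ι ℝ :=
  Matrix.of fun j k => ∫ x, g j x * g k x ∂μ

variable [DecidableEq ι] in
/-- `Γ (Γ*Γ)⁻¹ b`, where `Γ c = ∑ⱼ cⱼ gⱼ`. -/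
def minNormInterpolant (b : ι → ℝ) : α → ℝ :=
  fun x => ∑ j, ((l2Gram μ g)⁻¹ *ᵥ b) j * g j x

variable {μ g}

theorem integral_sum_mul_mul (hg : ∀ j, MemLp (g j) 2 μ) (c : ι → ℝ) {q : α → ℝ}
    (hq : MemLp q 2 μ) :
    ∫ x, (∑ j, c j * g j x) * q x ∂μ = ∑ j, c j * ∫ x, g j x * q x ∂μ := by
  have hint (j : ι) : Integrable (fun x => c j * (g j x * q x)) μ :=
    ((hg j).integrable_mul hq).const_mul (c j)
  simp_rw [Finset.sum_mul, mul_assoc]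
  rw [integral_finsetSum _ fun j _ => hint j]
  simp_rw [integral_const_mul]

theorem l2Gram_mulVec_apply (c : ι → ℝ) (k : ι) :
    (l2Gram μ g *ᵥ c) k = ∑ j, c j * ∫ x, g j x * g k x ∂μ := by
  simp only [Matrix.mulVec, dotProduct, l2Gram, Matrix.of_apply]
  exact Finset.sum_congr rfl fun j _ => by simp_rw [mul_comm (g k _), mul_comm (c j)]

theorem integral_sub_sq_of_integral_mul_eq {p q : α → ℝ} (hp : MemLp p 2 μ) (hq : MemLp q 2 μ)
    (h : ∫ x, p x * q x ∂μ = ∫ x, p x ^ 2 ∂μ) :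
    ∫ x, (q x - p x) ^ 2 ∂μ = ∫ x, q x ^ 2 ∂μ - ∫ x, p x ^ 2 ∂μ := by
  have hpq : Integrable (fun x => 2 * (p x * q x)) μ := (hp.integrable_mul hq).const_mul 2
  have hqpq : Integrable (fun x => q x ^ 2 - 2 * (p x * q x)) μ := hq.integrable_sq.sub hpq
  have hexp : (fun x => (q x - p x) ^ 2) = fun x => q x ^ 2 - 2 * (p x * q x) + p x ^ 2 := by
    funext x; ring
  rw [hexp, integral_add hqpq hp.integrable_sq,
    integral_sub hq.integrable_sq hpq, integral_const_mul, h]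
  ring

variable [DecidableEq ι]

theorem memLp_minNormInterpolant (hg : ∀ j, MemLp (g j) 2 μ) (b : ι → ℝ) :
    MemLp (minNormInterpolant μ g b) 2 μ :=
  memLp_finsetSum _ fun j _ => (hg j).const_mul _

theorem integral_minNormInterpolant_mul (hg : ∀ j, MemLp (g j) 2 μ) (b : ι → ℝ) {q : α → ℝ}
    (hq : MemLp q 2 μ) :
    ∫ x, minNormInterpolant μ g b x * q x ∂μ =
      ∑ j, ((l2Gram μ g)⁻¹ *ᵥ b) j * ∫ x, g j x * q x ∂μ :=
  integral_sum_mul_mul hg _ hq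

theorem integral_mul_minNormInterpolant (hg : ∀ j, MemLp (g j) 2 μ)
    (hG : IsUnit (l2Gram μ g)) (b : ι → ℝ) (k : ι) :
    ∫ x, g k x * minNormInterpolant μ g b x ∂μ = b k := by
  have hGc : l2Gram μ g *ᵥ ((l2Gram μ g)⁻¹ *ᵥ b) = b := by
    rw [Matrix.mulVec_mulVec, Matrix.mul_nonsing_inv _ ((Matrix.isUnit_iff_isUnit_det _).mp hG),
      Matrix.one_mulVec]
  simp_rw [mul_comm (g k _)]
  rw [integral_minNormInterpolant_mul hg b (hg k), ← congrFun hGc k, l2Gram_mulVec_apply]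

variable {b : ι → ℝ} {q : α → ℝ}

/-- Pythagoras: `q − P` is orthogonal to `P` for every solution `q` of `Γ* q = b`. -/
theorem integral_sub_minNormInterpolant_sq (hg : ∀ j, MemLp (g j) 2 μ)
    (hG : IsUnit (l2Gram μ g)) (hq : MemLp q 2 μ) (hqb : ∀ k, ∫ x, g k x * q x ∂μ = b k) :
    ∫ x, (q x - minNormInterpolant μ g b x) ^ 2 ∂μ =
      ∫ x, q x ^ 2 ∂μ - ∫ x, minNormInterpolant μ g b x ^ 2 ∂μ := by
  have hP := memLp_minNormInterpolant hg b
  refine integral_sub_sq_of_integral_mul_eq hP hq ?_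
  calc ∫ x, minNormInterpolant μ g b x * q x ∂μ
      = ∫ x, minNormInterpolant μ g b x * minNormInterpolant μ g b x ∂μ := by
        rw [integral_minNormInterpolant_mul hg b hq, integral_minNormInterpolant_mul hg b hP]
        simp_rw [hqb, integral_mul_minNormInterpolant hg hG]
    _ = ∫ x, minNormInterpolant μ g b x ^ 2 ∂μ := by simp_rw [sq]

theorem integral_minNormInterpolant_sq_le (hg : ∀ j, MemLp (g j) 2 μ)
    (hG : IsUnit (l2Gram μ g)) (hq : MemLp q 2 μ) (hqb : ∀ k, ∫ x, g k x * q x ∂μ = b k) :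
    ∫ x, minNormInterpolant μ g b x ^ 2 ∂μ ≤ ∫ x, q x ^ 2 ∂μ := by
  have h0 : 0 ≤ ∫ x, (q x - minNormInterpolant μ g b x) ^ 2 ∂μ :=
    integral_nonneg fun x => sq_nonneg _
  linarith [integral_sub_minNormInterpolant_sq hg hG hq hqb]

theorem ae_eq_minNormInterpolant_of_integral_sq_le (hg : ∀ j, MemLp (g j) 2 μ)
    (hG : IsUnit (l2Gram μ g)) (hq : MemLp q 2 μ) (hqb : ∀ k, ∫ x, g k x * q x ∂μ = b k)
    (hle : ∫ x, q x ^ 2 ∂μ ≤ ∫ x, minNormInterpolant μ g b x ^ 2 ∂μ) :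
    q =ᵐ[μ] minNormInterpolant μ g b := by
  have hP := memLp_minNormInterpolant hg b
  have h0 : 0 ≤ ∫ x, (q x - minNormInterpolant μ g b x) ^ 2 ∂μ :=
    integral_nonneg fun x => sq_nonneg _
  have hzero : ∫ x, (q x - minNormInterpolant μ g b x) ^ 2 ∂μ = 0 := by
    linarith [integral_sub_minNormInterpolant_sq hg hG hq hqb]
  filter_upwards [(integral_eq_zero_iff_of_nonneg (fun x => sq_nonneg _)
    (hq.sub hP).integrable_sq).1 hzero] with x hx
  exact sub_eq_zero.mp (pow_eq_zero_iff two_ne_zero |>.mp hx)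

end MinNormInterpolation

section Torus

variable {φ φd : 𝕋 → ℝ}

theorem continuous_of_continuous_lift {f : 𝕋 → ℝ} (h : Continuous (lift f)) : Continuous f :=
  (QuotientAddGroup.isQuotientMap_mk _).continuous_iff.mpr h

theorem integrable_comp_sub_mul {f q : 𝕋 → ℝ} (hf : Continuous f) (hq : Integrable q) (t : 𝕋) :
    Integrable (fun x => f (t - x) * q x) := by
  have hft : Continuous fun x => f (t - x) := hf.comp (continuous_sub_left t)
  exact hq.bdd_mul hft.aestronglyMeasurable
    (ae_of_all _ fun x => ContinuousMap.norm_coe_le_norm ⟨fun x => f (t - x), hft⟩ x)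

theorem continuous_of_lift_eq_deriv (hφ : ContDiff ℝ 1 (lift φ))
    (hφd : ∀ s : ℝ, φd ((s : ℝ) : 𝕋) = deriv (lift φ) s) : Continuous φd :=
  continuous_of_continuous_lift <| by
    rw [show lift φd = deriv (lift φ) from funext hφd]
    exact hφ.continuous_deriv le_rfl

theorem hasDerivAt_comp_coe_sub (hφ : Differentiable ℝ (lift φ))
    (hφd : ∀ s : ℝ, φd ((s : ℝ) : 𝕋) = deriv (lift φ) s) (x : 𝕋) (s : ℝ) :
    HasDerivAt (fun r : ℝ => φ (r - x)) (φd (s - x)) s := by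
  induction x using QuotientAddGroup.induction_on with
  | H y =>
    simp only [← AddCircle.coe_sub, hφd]
    exact (hφ _).hasDerivAt.comp_sub_const s y

theorem hasDerivAt_lift_phiStar (hφ : ContDiff ℝ 1 (lift φ))
    (hφd : ∀ s : ℝ, φd ((s : ℝ) : 𝕋) = deriv (lift φ) s) {q : 𝕋 → ℝ} (hq : Integrable q)
    (s : ℝ) : HasDerivAt (lift (PhiStar φ q)) (∫ x, φd (s - x) * q x) s := by
  have hφc : Continuous φ := continuous_of_continuous_lift hφ.continuous
  have hφdc : Continuous φd := continuous_of_lift_eq_deriv hφ hφd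
  set C := ‖(⟨φd, hφdc⟩ : C(𝕋, ℝ))‖
  have hbound (x : 𝕋) (r : ℝ) : ‖φd (r - x) * q x‖ ≤ C * ‖q x‖ := by
    rw [norm_mul]
    exact mul_le_mul_of_nonneg_right (ContinuousMap.norm_coe_le_norm ⟨φd, hφdc⟩ _) (norm_nonneg _)
  exact (hasDerivAt_integral_of_dominated_loc_of_deriv_le (x₀ := s)
    (F := fun (r : ℝ) x => φ (r - x) * q x) (F' := fun (r : ℝ) x => φd (r - x) * q x)
    (bound := fun x => C * ‖q x‖) Filter.univ_mem
    (Filter.Eventually.of_forall fun r => (integrable_comp_sub_mul hφc hq r).aestronglyMeasurable)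
    (integrable_comp_sub_mul hφc hq s) (integrable_comp_sub_mul hφdc hq s).aestronglyMeasurable
    (ae_of_all _ fun x r _ => hbound x r) (hq.norm.const_mul _)
    (ae_of_all _ fun x r _ =>
      (hasDerivAt_comp_coe_sub (hφ.differentiable one_ne_zero) hφd x r).mul_const (q x))).2

theorem vConstr_iff (hφ : ContDiff ℝ 1 (lift φ))
    (hφd : ∀ s : ℝ, φd ((s : ℝ) : 𝕋) = deriv (lift φ) s) (a₀ x₀ : Fin N → ℝ) {q : 𝕋 → ℝ}
    (hq : Integrable q) :
    VConstr φ a₀ x₀ q ↔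
      ∀ j, ∫ x, gker φ φd x₀ j x * q x = Sum.elim (fun i => Real.sign (a₀ i)) (fun _ => 0) j := by
  simp only [VConstr, Sum.forall, gker, Sum.elim_inl, Sum.elim_inr, PhiStar,
    (hasDerivAt_lift_phiStar hφ hφd hq _).deriv, forall_and]

theorem memLp_gker (hφ : ContDiff ℝ 1 (lift φ))
    (hφd : ∀ s : ℝ, φd ((s : ℝ) : 𝕋) = deriv (lift φ) s) (x₀ : Fin N → ℝ) (j : Fin N ⊕ Fin N) :
    MemLp (gker φ φd x₀ j) 2 volume := by
  have hcont : Continuous (gker φ φd x₀ j) := by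
    cases j with
    | inl i => exact (continuous_of_continuous_lift hφ.continuous).comp (continuous_sub_left _)
    | inr i => exact (continuous_of_lift_eq_deriv hφ hφd).comp (continuous_sub_left _)
  exact hcont.memLp_of_hasCompactSupport (.of_compactSpace _)

end Torus

theorem vanishing_derivative_closed_form_general (φ φd : 𝕋 → ℝ)
    (hφ : ContDiff ℝ 2 (lift φ)) (hφd : ∀ s : ℝ, φd ((s : ℝ) : 𝕋) = deriv (lift φ) s)
    (a₀ : Fin N → ℝ) (x₀ : Fin N → ℝ)
    (hM : IsUnit (gram φ φd x₀)) :
    (∃ pV : 𝕋 → ℝ, MemLp pV 2 volume ∧ VConstr φ a₀ x₀ pV ∧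
        ∀ q : 𝕋 → ℝ, MemLp q 2 volume → VConstr φ a₀ x₀ q → L2norm pV ≤ L2norm q) ∧
      ∀ pV : 𝕋 → ℝ,
        (MemLp pV 2 volume ∧ VConstr φ a₀ x₀ pV ∧
          ∀ q : 𝕋 → ℝ, MemLp q 2 volume → VConstr φ a₀ x₀ q → L2norm pV ≤ L2norm q) →
        ∀ t : 𝕋, PhiStar φ pV t =
          PhiStar φ
            (fun x => ∑ j, (Matrix.mulVec (gram φ φd x₀)⁻¹
              (Sum.elim (fun i => Real.sign (a₀ i)) (fun _ => 0))) j * gker φ φd x₀ j x)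
            t := by
  have hφ₁ : ContDiff ℝ 1 (lift φ) := hφ.of_le one_le_two
  have hg := memLp_gker hφ₁ hφd x₀
  have hconstr (q : 𝕋 → ℝ) (hq : MemLp q 2 volume) :=
    vConstr_iff hφ₁ hφd a₀ x₀ (hq.integrable one_le_two)
  set P := minNormInterpolant volume (gker φ φd x₀)
    (Sum.elim (fun i => Real.sign (a₀ i)) (fun _ => 0))
  have hP : MemLp P 2 volume := memLp_minNormInterpolant hg _
  have hPc : VConstr φ a₀ x₀ P := (hconstr P hP).2 (integral_mul_minNormInterpolant hg hM _)
  refine ⟨⟨P, hP, hPc, fun q hq hqc => Real.sqrt_le_sqrt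
    (integral_minNormInterpolant_sq_le hg hM hq ((hconstr q hq).1 hqc))⟩, ?_⟩
  rintro pV ⟨hpV, hpVc, hpVmin⟩ t
  have hle : ∫ x, pV x ^ 2 ≤ ∫ x, P x ^ 2 :=
    (Real.sqrt_le_sqrt_iff (integral_nonneg fun _ => sq_nonneg _)).1 (hpVmin P hP hPc)
  have hae := ae_eq_minNormInterpolant_of_integral_sq_le hg hM hpV ((hconstr pV hpV).1 hpVc) hle
  exact integral_congr_ae (hae.mono fun x hx => congrArg (φ (t - x) * ·) hx)

/-- **Closed form of the vanishing derivative pre-certificate.** If `Γ_{x₀}` has full rank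
(`Γ_{x₀}*Γ_{x₀}` invertible) and the vanishing-derivative problem is feasible, then the
pre-certificate `η_V` is uniquely defined and given by
`η_V = Φ* Γ_{x₀} (Γ_{x₀}*Γ_{x₀})⁻¹ (sign(a₀), 0)ᵀ`. -/
theorem vanishing_derivative_closed_form (φ φd : 𝕋 → ℝ)
    (hφ : ContDiff ℝ 2 (lift φ)) (hφd : ∀ s : ℝ, φd ((s : ℝ) : 𝕋) = deriv (lift φ) s)
    (a₀ : Fin N → ℝ) (x₀ : Fin N → ℝ) (ha₀ : ∀ i, a₀ i ≠ 0)
    (hx₀ : Function.Injective (fun i => ((x₀ i : ℝ) : 𝕋)))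
    (hM : IsUnit (gram φ φd x₀))
    (hfeas : ∃ p : 𝕋 → ℝ, MemLp p 2 volume ∧ VConstr φ a₀ x₀ p) :
    (∃ pV : 𝕋 → ℝ, MemLp pV 2 volume ∧ VConstr φ a₀ x₀ pV ∧
        ∀ q : 𝕋 → ℝ, MemLp q 2 volume → VConstr φ a₀ x₀ q → L2norm pV ≤ L2norm q) ∧
      ∀ pV : 𝕋 → ℝ,
        (MemLp pV 2 volume ∧ VConstr φ a₀ x₀ pV ∧
          ∀ q : 𝕋 → ℝ, MemLp q 2 volume → VConstr φ a₀ x₀ q → L2norm pV ≤ L2norm q) →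
        ∀ t : 𝕋, PhiStar φ pV t =
          PhiStar φ
            (fun x => ∑ j, (Matrix.mulVec (gram φ φd x₀)⁻¹
              (Sum.elim (fun i => Real.sign (a₀ i)) (fun _ => 0))) j * gker φ φd x₀ j x)
            t :=
  vanishing_derivative_closed_form_general φ φd hφ hφd a₀ x₀ hM
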